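/- Let π be a probability measure on [0,∞), let κ > 0 and λ > 0, and let p_eff(w) = 1 − e^{−κw}. Then the effective capacity satisfies λ·∫ (1 − h((1 − √(1 − p_eff(w)))/2)) dπ(w) = (λ/ln 2) · ∑_{k=1}^{∞} (1/(2k(2k−1))) · ∫ e^{−κ k w} dπ(w). -/

import Mathlib

/-!
With `z = √(1 - p_eff(w)) = e^{-κw/2}` one has
`1 - h((1 - z)/2) = ((1 + z) log (1 + z) + (1 - z) log (1 - z)) / (2 ln 2)`, and the numerator
is the even power series `∑_{k ≥ 1} z^{2k} / (k (2k - 1))`, obtained for `|z| < 1` from the series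
of `log (1 ± z)` and extended to `z = 1` (i.e. `w = 0`) by uniform convergence. Since
`z^{2k} = e^{-κkw} ∈ [0, 1]` on the support of `π` and the coefficients are summable, the series
may be integrated termwise.
-/

open MeasureTheory

/-- The binary entropy function in base 2 (with the convention `h(0) = h(1) = 0`,
using `Real.logb 2 0 = 0`). -/
noncomputable def binH (x : ℝ) : ℝ := -(x * Real.logb 2 x) - (1 - x) * Real.logb 2 (1 - x)

section

open Real

noncomputable def entropySeriesCoeff (k : ℕ) : ℝ :=
  1 / ((2 * ((k : ℝ) + 1)) * (2 * ((k : ℝ) + 1) - 1))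

lemma entropySeriesCoeff_eq (k : ℕ) :
    entropySeriesCoeff k = 1 / ((2 * k + 2) * (2 * k + 1)) := by
  unfold entropySeriesCoeff; ring_nf

lemma entropySeriesCoeff_pos (k : ℕ) : 0 < entropySeriesCoeff k := by
  rw [entropySeriesCoeff_eq]; positivity

lemma summable_entropySeriesCoeff : Summable entropySeriesCoeff := by
  have hsq : Summable fun k : ℕ => 1 / ((k : ℝ) + 1) ^ 2 := by
    exact_mod_cast (summable_nat_add_iff 1).mpr (summable_one_div_nat_pow.mpr one_lt_two)
  refine hsq.of_nonneg_of_le (fun k => (entropySeriesCoeff_pos k).le) fun k => ?_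
  rw [entropySeriesCoeff_eq]
  gcongr
  nlinarith

-- The sum is `z (log (1 + z) - log (1 - z)) + log (1 - z²)`, expanded termwise.
lemma hasSum_entropySeriesCoeff_mul_pow {z : ℝ} (hz : |z| < 1) :
    HasSum (fun k : ℕ => 2 * entropySeriesCoeff k * z ^ (2 * k + 2))
      ((1 + z) * log (1 + z) + (1 - z) * log (1 - z)) := by
  have hz2 : |z ^ 2| < 1 := by
    rw [abs_pow]; exact pow_lt_one₀ (abs_nonneg z) hz two_ne_zero
  have hpos : 0 < 1 - z ∧ 0 < 1 + z := by
    constructor <;> linarith [abs_lt.1 hz]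
  have hlog : log (1 - z ^ 2) = log (1 - z) + log (1 + z) := by
    rw [show (1 : ℝ) - z ^ 2 = (1 - z) * (1 + z) by ring, log_mul hpos.1.ne' hpos.2.ne']
  have h := ((hasSum_log_sub_log_of_abs_lt_one hz).mul_left z).sub
    (hasSum_pow_div_log_of_abs_lt_one hz2)
  rw [hlog, show z * (log (1 + z) - log (1 - z)) - -(log (1 - z) + log (1 + z)) =
    (1 + z) * log (1 + z) + (1 - z) * log (1 - z) by ring] at h
  refine h.congr_fun fun k => ?_
  rw [entropySeriesCoeff_eq]
  field_simp
  ring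

-- The endpoints `z = ±1` follow by continuity: the coefficients are summable, so the series
-- converges uniformly on `[-1, 1]`.
lemma tsum_entropySeriesCoeff_mul_pow {z : ℝ} (hz : |z| ≤ 1) :
    2 * ∑' k, entropySeriesCoeff k * z ^ (2 * k + 2) =
      (1 + z) * log (1 + z) + (1 - z) * log (1 - z) := by
  suffices Set.EqOn (fun z => ∑' k, 2 * entropySeriesCoeff k * z ^ (2 * k + 2))
      (fun z => (1 + z) * log (1 + z) + (1 - z) * log (1 - z)) (Set.Icc (-1) 1) by
    rw [← tsum_mul_left]; simpa only [mul_assoc] using this (abs_le.1 hz)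
  refine Set.EqOn.of_subset_closure (s := Set.Ioo (-1) 1)
    (fun z hz => (hasSum_entropySeriesCoeff_mul_pow (abs_lt.2 hz)).tsum_eq) ?_ ?_
    Set.Ioo_subset_Icc_self (closure_Ioo (by norm_num)).ge
  · refine continuousOn_tsum (fun k => by fun_prop)
      (summable_entropySeriesCoeff.mul_left 2) fun k z hz => ?_
    rw [norm_mul, norm_pow, norm_eq_abs, abs_of_pos (by linarith [entropySeriesCoeff_pos k])]
    exact mul_le_of_le_one_right (by linarith [entropySeriesCoeff_pos k])
      (pow_le_one₀ (abs_nonneg z) (abs_le.2 hz))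
  · exact ((continuous_mul_log.comp (continuous_const.add continuous_id)).add
      (continuous_mul_log.comp (continuous_const.sub continuous_id))).continuousOn

lemma div_two_mul_logb_div_two (x : ℝ) :
    x / 2 * logb 2 (x / 2) = (x * log x - x * log 2) / (2 * log 2) := by
  rcases eq_or_ne x 0 with rfl | hx
  · simp
  · rw [logb, log_div hx two_ne_zero]; ring

lemma one_sub_binH_one_sub_div_two (z : ℝ) :
    1 - binH ((1 - z) / 2) = ((1 + z) * log (1 + z) + (1 - z) * log (1 - z)) / (2 * log 2) := by
  rw [binH, show 1 - (1 - z) / 2 = (1 + z) / 2 by ring, div_two_mul_logb_div_two,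
    div_two_mul_logb_div_two]
  field_simp
  ring

lemma one_sub_binH_exp_eq_tsum {κ w : ℝ} (hκw : 0 ≤ κ * w) :
    1 - binH ((1 - √(1 - (1 - exp (-(κ * w))))) / 2) =
      1 / log 2 * ∑' k : ℕ, entropySeriesCoeff k * exp (-(κ * ((k : ℝ) + 1) * w)) := by
  set z := exp (-(κ * w) / 2)
  have hpow (n : ℕ) : z ^ n = exp (-(n * (κ * w)) / 2) := by
    rw [← exp_nat_mul]; ring_nf
  have hsqrt : √(1 - (1 - exp (-(κ * w)))) = z := by
    rw [sub_sub_cancel, show exp (-(κ * w)) = z ^ 2 by rw [hpow]; ring_nf,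
      sqrt_sq (exp_pos _).le]
  have hz : |z| ≤ 1 := by
    rw [abs_of_pos (exp_pos _)]; exact exp_le_one_iff.2 (by linarith)
  rw [hsqrt, one_sub_binH_one_sub_div_two, ← tsum_entropySeriesCoeff_mul_pow hz]
  simp only [hpow]
  push_cast
  field_simp
  congr! 3 with k
  ring_nf

lemma integral_tsum_mul_of_norm_le_one {α : Type*} [MeasurableSpace α] {μ : Measure α}
    [IsFiniteMeasure μ] {c : ℕ → ℝ} (hc : Summable c) {f : ℕ → α → ℝ}
    (hf : ∀ k, AEStronglyMeasurable (f k) μ) (hf1 : ∀ k, ∀ᵐ x ∂μ, ‖f k x‖ ≤ 1) :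
    ∫ x, ∑' k, c k * f k x ∂μ = ∑' k, c k * ∫ x, f k x ∂μ := by
  have hbound (k : ℕ) : ∀ᵐ x ∂μ, ‖c k * f k x‖ ≤ ‖c k‖ := by
    filter_upwards [hf1 k] with x hx
    rw [norm_mul]; exact mul_le_of_le_one_right (norm_nonneg _) hx
  have hint (k : ℕ) : Integrable (fun x => c k * f k x) μ :=
    .of_bound ((hf k).const_mul _) _ (hbound k)
  rw [← integral_tsum_of_summable_integral_norm hint]
  · simp only [integral_const_mul]
  · refine (hc.norm.mul_right (μ.real Set.univ)).of_nonneg_of_le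
      (fun k => integral_nonneg fun x => norm_nonneg _) fun k => ?_
    refine (le_norm_self _).trans (norm_integral_le_of_norm_le_const ?_)
    simpa only [norm_norm] using hbound k

end

theorem effective_capacity_series_general (π : Measure ℝ) [IsProbabilityMeasure π]
    (hπ : π (Set.Iio (0 : ℝ)) = 0) (κ lam : ℝ) (hκ : 0 < κ) :
    lam * ∫ w, (1 - binH ((1 - Real.sqrt (1 - (1 - Real.exp (-(κ * w))))) / 2)) ∂π =
      (lam / Real.log 2) *
        ∑' k : ℕ,
          (1 / ((2 * ((k : ℝ) + 1)) * (2 * ((k : ℝ) + 1) - 1))) *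
            ∫ w, Real.exp (-(κ * ((k : ℝ) + 1) * w)) ∂π := by
  have hnonneg : ∀ᵐ w ∂π, 0 ≤ w := by
    simpa using measure_eq_zero_iff_ae_notMem.1 hπ
  have hexp_le_one (k : ℕ) : ∀ᵐ w ∂π, ‖Real.exp (-(κ * ((k : ℝ) + 1) * w))‖ ≤ 1 := by
    filter_upwards [hnonneg] with w hw
    rw [Real.norm_of_nonneg (Real.exp_pos _).le, Real.exp_le_one_iff, neg_nonpos]
    positivity
  rw [integral_congr_ae (hnonneg.mono fun w hw =>
      one_sub_binH_exp_eq_tsum (mul_nonneg hκ.le hw)),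
    integral_const_mul, integral_tsum_mul_of_norm_le_one summable_entropySeriesCoeff
      (fun k => by fun_prop) hexp_le_one]
  simp only [entropySeriesCoeff]
  ring

/-- For a probability measure `π` on `[0,∞)` modelling the stationary waiting time, `κ > 0`,
`λ > 0`, and exponential decoherence `p_eff(w) = 1 − e^{−κw}`, the effective capacity
`λ·E_π[1 − h((1 − √(1 − p_eff(W)))/2)]` equals
`(λ/ln 2)·∑_{k≥1} (1/(2k(2k−1)))·E_π[e^{−κkW}]`. -/
theorem effective_capacity_series (π : Measure ℝ) [IsProbabilityMeasure π]
    (hπ : π (Set.Iio (0 : ℝ)) = 0) (κ lam : ℝ) (hκ : 0 < κ) (hlam : 0 < lam) :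
    lam * ∫ w, (1 - binH ((1 - Real.sqrt (1 - (1 - Real.exp (-(κ * w))))) / 2)) ∂π =
      (lam / Real.log 2) *
        ∑' k : ℕ,
          (1 / ((2 * ((k : ℝ) + 1)) * (2 * ((k : ℝ) + 1) - 1))) *
            ∫ w, Real.exp (-(κ * ((k : ℝ) + 1) * w)) ∂π :=
  effective_capacity_series_general π hπ κ lam hκ
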